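/- The integral I_μ = ∫_0^∞ z^{2μ+ν+M-3} K_{M+1-ν}(z)^2 / K_{M-ν}(z) dz converges if and only if μ + ν > 2, given M - ν > 0 and M + 1 - ν > 1. -/

import Mathlib

open Real Set MeasureTheory

/-- The modified Bessel function of the second kind, via its integral representation. -/
noncomputable def besselK (ν z : ℝ) : ℝ :=
  ∫ t in Ioi (0 : ℝ), Real.exp (-z * Real.cosh t) * Real.cosh (ν * t)

/-!
For `a > 0` the integral representation gives `K_a(z) ≍ z ^ (-a)` on `(0, 1]`: from above through
`cosh (a t) ≤ e ^ (a t)`, `cosh t ≥ e ^ t / 2` and the substitution `y = e ^ t`, which leads to a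
Gamma integral; from below by restricting to a unit interval of `t` near `log z⁻¹`. So near `0` the
integrand is `≍ z ^ (2μ + 2ν - 5)`. At infinity `K_b(z) ≤ K_b(1) e ^ (1 - z)` while
`K_a(z) ≥ e ^ (-z cosh 1)` and `cosh 1 < 2`, so the integrand decays exponentially.
-/

lemma Real.cosh_le_exp_of_nonneg {t : ℝ} (ht : 0 ≤ t) : cosh t ≤ exp t := by
  rw [cosh_eq]
  linarith [exp_le_exp.mpr (neg_le_self ht)]

lemma Real.exp_le_two_mul_cosh (t : ℝ) : exp t ≤ 2 * cosh t := by
  rw [cosh_eq]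
  linarith [exp_pos (-t)]

lemma Real.cosh_one_lt_two : cosh 1 < 2 := by
  have h := exp_one_lt_d9
  have : exp (-1) < 1 := exp_lt_one_iff.mpr (by norm_num)
  rw [cosh_eq]
  norm_num at h
  linarith

lemma exp_mul_mul_exp_neg_mul_exp_eq_smul (a c t : ℝ) :
    exp (a * t) * exp (-(c * exp t)) = exp t • ((exp t) ^ (a - 1) * exp (-(c * exp t))) := by
  rw [smul_eq_mul, rpow_def_of_pos (exp_pos t), log_exp, ← mul_assoc, ← exp_add t]
  ring_nf

lemma integrableOn_exp_mul_mul_exp_neg_mul_exp {a c : ℝ} (ha : 0 < a) (hc : 0 < c) :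
    IntegrableOn (fun t ↦ exp (a * t) * exp (-(c * exp t))) (Ioi 0) := by
  simp_rw [exp_mul_mul_exp_neg_mul_exp_eq_smul a c]
  rw [integrableOn_comp_exp_Ioi (fun y ↦ y ^ (a - 1) * exp (-(c * y))), exp_zero]
  refine ((integrableOn_rpow_mul_exp_neg_mul_rpow (s := a - 1) (by linarith) one_pos hc).mono_set
    (Ioi_subset_Ioi zero_le_one)).congr_fun (fun y _ ↦ ?_) measurableSet_Ioi
  simp [rpow_one, neg_mul]

lemma integral_exp_mul_mul_exp_neg_mul_exp_le {a c : ℝ} (ha : 0 < a) (hc : 0 < c) :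
    ∫ t in Ioi 0, exp (a * t) * exp (-(c * exp t)) ≤ (1 / c) ^ a * Gamma a := by
  simp_rw [exp_mul_mul_exp_neg_mul_exp_eq_smul a c]
  rw [integral_comp_exp_Ioi (fun y ↦ y ^ (a - 1) * exp (-(c * y))), exp_zero,
    ← integral_rpow_mul_exp_neg_mul_Ioi ha hc]
  refine setIntegral_mono_set ?_ ?_ (Ioi_subset_Ioi zero_le_one).eventuallyLE
  · refine (integrableOn_rpow_mul_exp_neg_mul_rpow (s := a - 1) (by linarith) one_pos hc).congr_fun
      (fun y _ ↦ ?_) measurableSet_Ioi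
    simp [rpow_one, neg_mul]
  · filter_upwards [ae_restrict_mem measurableSet_Ioi] with y hy
    exact mul_nonneg (rpow_nonneg (le_of_lt hy) _) (exp_pos _).le

lemma measurable_besselK (a : ℝ) : Measurable (besselK a) := by
  have h : Continuous fun x : ℝ × ℝ ↦ exp (-x.1 * cosh x.2) * cosh (a * x.2) := by fun_prop
  exact (h.stronglyMeasurable.integral_prod_right' (ν := volume.restrict (Ioi 0))).measurable

section BesselK

variable {a z : ℝ}

lemma besselK_integrand_le (ha : 0 < a) (hz : 0 < z) {t : ℝ} (ht : 0 < t) :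
    exp (-z * cosh t) * cosh (a * t) ≤ exp (a * t) * exp (-(z / 2 * exp t)) := by
  rw [mul_comm]
  gcongr
  · exact cosh_le_exp_of_nonneg (by positivity)
  · nlinarith [exp_le_two_mul_cosh t]

lemma integrableOn_besselK_integrand (ha : 0 < a) (hz : 0 < z) :
    IntegrableOn (fun t ↦ exp (-z * cosh t) * cosh (a * t)) (Ioi 0) := by
  refine (integrableOn_exp_mul_mul_exp_neg_mul_exp ha (half_pos hz)).mono'
    (by fun_prop : Continuous _).aestronglyMeasurable ?_
  filter_upwards [ae_restrict_mem measurableSet_Ioi] with t ht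
  rw [norm_of_nonneg (by positivity)]
  exact besselK_integrand_le ha hz ht

lemma besselK_le_mul_rpow_neg (ha : 0 < a) (hz : 0 < z) :
    besselK a z ≤ 2 ^ a * Gamma a * z ^ (-a) := by
  calc besselK a z ≤ ∫ t in Ioi 0, exp (a * t) * exp (-(z / 2 * exp t)) :=
        setIntegral_mono_on (integrableOn_besselK_integrand ha hz)
          (integrableOn_exp_mul_mul_exp_neg_mul_exp ha (half_pos hz)) measurableSet_Ioi
          fun t ht ↦ besselK_integrand_le ha hz ht
    _ ≤ (1 / (z / 2)) ^ a * Gamma a := integral_exp_mul_mul_exp_neg_mul_exp_le ha (half_pos hz)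
    _ = 2 ^ a * Gamma a * z ^ (-a) := by
        rw [one_div_div, div_rpow zero_le_two hz.le, rpow_neg hz.le]
        ring

lemma le_besselK_of_forall_Ioc_le (ha : 0 < a) (hz : 0 < z) {c T : ℝ} (hT : 0 ≤ T)
    (hc : ∀ t ∈ Ioc T (T + 1), c ≤ exp (-z * cosh t) * cosh (a * t)) : c ≤ besselK a z := by
  have hint := integrableOn_besselK_integrand ha hz
  calc c = c * volume.real (Ioc T (T + 1)) := by simp
    _ ≤ ∫ t in Ioc T (T + 1), exp (-z * cosh t) * cosh (a * t) :=
        setIntegral_ge_of_const_le_real measurableSet_Ioc measure_Ioc_lt_top.ne hc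
          (hint.mono_set fun t ht ↦ hT.trans_lt ht.1)
    _ ≤ besselK a z :=
        setIntegral_mono_set hint (.of_forall fun t ↦ by positivity)
          (LE.le.eventuallyLE fun t ht ↦ hT.trans_lt ht.1)

lemma exp_neg_mul_cosh_one_le_besselK (ha : 0 < a) (hz : 0 < z) :
    exp (-z * cosh 1) ≤ besselK a z := by
  refine le_besselK_of_forall_Ioc_le ha hz le_rfl fun t ht ↦ ?_
  rw [zero_add] at ht
  have hcosh : cosh t ≤ cosh 1 := cosh_le_cosh.mpr (by rw [abs_of_pos ht.1, abs_one]; exact ht.2)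
  calc exp (-z * cosh 1) = exp (-z * cosh 1) * 1 := (mul_one _).symm
    _ ≤ exp (-z * cosh t) * cosh (a * t) :=
        mul_le_mul (exp_le_exp.mpr (by nlinarith)) (one_le_cosh _) zero_le_one (exp_pos _).le

lemma besselK_pos (ha : 0 < a) (hz : 0 < z) : 0 < besselK a z :=
  (exp_pos _).trans_le (exp_neg_mul_cosh_one_le_besselK ha hz)

/-- On `t ∈ (log z⁻¹, log z⁻¹ + 1]` one has `z cosh t ≤ e` and `cosh (a t) ≥ z ^ (-a) / 2`. -/
lemma mul_rpow_neg_le_besselK (ha : 0 < a) (hz : 0 < z) (hz1 : z ≤ 1) :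
    exp (-exp 1) / 2 * z ^ (-a) ≤ besselK a z := by
  have hT : 0 ≤ -log z := neg_nonneg.mpr (log_nonpos hz.le hz1)
  refine le_besselK_of_forall_Ioc_le ha hz hT fun t ht ↦ ?_
  have hzcosh : z * cosh t ≤ exp 1 :=
    calc z * cosh t ≤ z * exp (-log z + 1) := by
          gcongr
          exact (cosh_le_exp_of_nonneg (hT.trans ht.1.le)).trans (exp_le_exp.mpr ht.2)
      _ = exp 1 := by rw [exp_add, exp_neg, exp_log hz]; field_simp
  have hrpow : z ^ (-a) ≤ 2 * cosh (a * t) :=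
    calc z ^ (-a) = exp (a * -log z) := by rw [rpow_def_of_pos hz]; ring_nf
      _ ≤ exp (a * t) := by gcongr; exact ht.1.le
      _ ≤ 2 * cosh (a * t) := exp_le_two_mul_cosh _
  calc exp (-exp 1) / 2 * z ^ (-a) = exp (-exp 1) * (z ^ (-a) / 2) := by ring
    _ ≤ exp (-z * cosh t) * cosh (a * t) := by
        gcongr <;> linarith

lemma besselK_le_mul_exp (ha : 0 < a) (hz : 1 ≤ z) :
    besselK a z ≤ besselK a 1 * exp (1 - z) := by
  rw [besselK, besselK, mul_comm, ← integral_const_mul]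
  refine setIntegral_mono_on (integrableOn_besselK_integrand ha (by linarith))
    ((integrableOn_besselK_integrand ha one_pos).const_mul _) measurableSet_Ioi fun t _ ↦ ?_
  have hprod : 0 ≤ (z - 1) * (cosh t - 1) := mul_nonneg (by linarith) (by linarith [one_le_cosh t])
  rw [← mul_assoc, ← exp_add]
  gcongr
  linarith

end BesselK

lemma integrableOn_Ioc_zero_one_iff_of_rpow_bounds {f : ℝ → ℝ} {q c C : ℝ}
    (hf : AEStronglyMeasurable f (volume.restrict (Ioc 0 1))) (hc : 0 < c)
    (hbounds : ∀ z ∈ Ioc (0 : ℝ) 1, c * z ^ q ≤ f z ∧ f z ≤ C * z ^ q) :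
    IntegrableOn f (Ioc 0 1) ↔ -1 < q := by
  rw [← intervalIntegral.integrableOn_Ioo_rpow_iff one_pos, ← integrableOn_Ioc_iff_integrableOn_Ioo]
  constructor
  · intro hfi
    have hmono : IntegrableOn (fun z ↦ c * z ^ q) (Ioc 0 1) := by
      refine hfi.mono' (by fun_prop) ?_
      filter_upwards [ae_restrict_mem measurableSet_Ioc] with z hz
      rw [norm_of_nonneg (by have := hz.1; positivity)]
      exact (hbounds z hz).1
    exact IntegrableOn.congr_fun (hmono.const_mul c⁻¹) (fun z _ ↦ by field_simp) measurableSet_Ioc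
  · intro hq
    refine (hq.const_mul C).mono' hf ?_
    filter_upwards [ae_restrict_mem measurableSet_Ioc] with z hz
    have hfz := hbounds z hz
    have hlow : 0 ≤ c * z ^ q := by have := hz.1; positivity
    rw [norm_of_nonneg (hlow.trans hfz.1)]
    exact hfz.2

lemma integrableOn_Ioi_one_rpow_mul_exp_neg_mul (p : ℝ) {b : ℝ} (hb : 0 < b) :
    IntegrableOn (fun z ↦ z ^ p * exp (-b * z)) (Ioi 1) := by
  have hint : IntegrableOn (fun z ↦ z ^ |p| * exp (-b * z)) (Ioi 1) := by
    refine ((integrableOn_rpow_mul_exp_neg_mul_rpow (s := |p|) (by linarith [abs_nonneg p])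
      one_pos hb).mono_set (Ioi_subset_Ioi zero_le_one)).congr_fun (fun z _ ↦ ?_) measurableSet_Ioi
    simp only [rpow_one]
  refine hint.mono' (by fun_prop) ?_
  filter_upwards [ae_restrict_mem measurableSet_Ioi] with z hz
  have hz1 : (1 : ℝ) ≤ z := le_of_lt hz
  rw [norm_of_nonneg (by positivity)]
  gcongr
  exact le_abs_self p

lemma measurable_rpow_mul_besselK_sq_div_besselK (p A B : ℝ) :
    Measurable fun z ↦ z ^ p * besselK B z ^ 2 / besselK A z :=
  ((measurable_id.pow_const p).mul ((measurable_besselK B).pow_const 2)).div (measurable_besselK A)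

section Ratio

variable {p A B : ℝ}

lemma rpow_mul_mul_rpow_neg_sq_div {z : ℝ} (hz : 0 < z) (x y : ℝ) :
    z ^ p * (x * z ^ (-B)) ^ 2 / (y * z ^ (-A)) = x ^ 2 / y * z ^ (p - 2 * B + A) := by
  rw [rpow_add hz, rpow_sub hz, rpow_neg hz.le, rpow_neg hz.le, mul_comm 2 B, rpow_mul hz.le]
  norm_num
  field_simp

lemma rpow_mul_besselK_sq_div_besselK_bounds (p : ℝ) (hA : 0 < A) (hB : 0 < B) :
    ∃ c > 0, ∃ C, ∀ z ∈ Ioc (0 : ℝ) 1,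
      c * z ^ (p - 2 * B + A) ≤ z ^ p * besselK B z ^ 2 / besselK A z ∧
      z ^ p * besselK B z ^ 2 / besselK A z ≤ C * z ^ (p - 2 * B + A) := by
  set κ := exp (-exp 1) / 2
  refine ⟨κ ^ 2 / (2 ^ A * Gamma A), by positivity, (2 ^ B * Gamma B) ^ 2 / κ,
    fun z ⟨hz, hz1⟩ ↦ ⟨?_, ?_⟩⟩
  · rw [← rpow_mul_mul_rpow_neg_sq_div hz]
    have hKB := mul_rpow_neg_le_besselK hB hz hz1
    gcongr
    · exact besselK_pos hA hz
    · exact besselK_le_mul_rpow_neg hA hz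
  · rw [← rpow_mul_mul_rpow_neg_sq_div hz]
    have hKA := mul_rpow_neg_le_besselK hA hz hz1
    have hKB := besselK_pos hB hz
    gcongr
    exact besselK_le_mul_rpow_neg hB hz

lemma integrableOn_Ioi_one_rpow_mul_besselK_sq_div_besselK (p : ℝ) (hA : 0 < A) (hB : 0 < B) :
    IntegrableOn (fun z ↦ z ^ p * besselK B z ^ 2 / besselK A z) (Ioi 1) := by
  have hε : 0 < 2 - cosh 1 := by linarith [cosh_one_lt_two]
  refine ((integrableOn_Ioi_one_rpow_mul_exp_neg_mul p hε).const_mul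
    ((besselK B 1 * exp 1) ^ 2)).mono' ?_ ?_
  · exact (measurable_rpow_mul_besselK_sq_div_besselK p A B).aestronglyMeasurable
  filter_upwards [ae_restrict_mem measurableSet_Ioi] with z hz
  have hz0 : 0 < z := one_pos.trans hz
  have hKB := besselK_pos hB hz0
  have hKA := besselK_pos hA hz0
  rw [norm_of_nonneg (by positivity)]
  calc z ^ p * besselK B z ^ 2 / besselK A z
      ≤ z ^ p * (besselK B 1 * exp (1 - z)) ^ 2 / exp (-z * cosh 1) := by
        gcongr
        · exact besselK_le_mul_exp hB hz.le
        · exact exp_neg_mul_cosh_one_le_besselK hA hz0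
    _ = (besselK B 1 * exp 1) ^ 2 * (z ^ p * exp (-(2 - cosh 1) * z)) := by
        have hexp : exp (1 - z) ^ 2 = exp 1 ^ 2 * exp (-(2 - cosh 1) * z) * exp (-z * cosh 1) := by
          rw [← exp_nat_mul, ← exp_nat_mul, ← exp_add, ← exp_add]
          ring_nf
        rw [div_eq_iff (exp_pos _).ne', mul_pow, hexp]
        ring

theorem integrableOn_rpow_mul_besselK_sq_div_besselK (hA : 0 < A) (hB : 0 < B) :
    IntegrableOn (fun z ↦ z ^ p * besselK B z ^ 2 / besselK A z) (Ioi 0) ↔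
      -1 < p - 2 * B + A := by
  obtain ⟨c, hc, C, hbounds⟩ := rpow_mul_besselK_sq_div_besselK_bounds p hA hB
  rw [← Ioc_union_Ioi_eq_Ioi zero_le_one, integrableOn_union,
    and_iff_left (integrableOn_Ioi_one_rpow_mul_besselK_sq_div_besselK p hA hB)]
  exact integrableOn_Ioc_zero_one_iff_of_rpow_bounds
    (measurable_rpow_mul_besselK_sq_div_besselK p A B).aestronglyMeasurable hc hbounds

end Ratio

theorem I_mu_convergence_general (M : ℕ) (ν : ℝ) (hνM : ν < M) (μ : ℝ) :
    IntegrableOn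
      (fun z => z ^ (2 * μ + ν + (M : ℝ) - 3) *
        (besselK ((M : ℝ) + 1 - ν) z) ^ 2 / besselK ((M : ℝ) - ν) z)
      (Ioi 0) ↔ μ + ν > 2 := by
  rw [integrableOn_rpow_mul_besselK_sq_div_besselK (by linarith) (by linarith)]
  constructor <;> intro h <;> linarith

/-- `I_μ = ∫_0^∞ z^(2μ+ν+M-3) K_{M+1-ν}(z)² / K_{M-ν}(z) dz` converges iff `μ + ν > 2`. -/
theorem I_mu_convergence (M : ℕ) (hM : 1 ≤ M) (ν : ℝ) (hν : 0 < ν) (hνM : ν < M) (μ : ℝ) :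
    IntegrableOn
      (fun z => z ^ (2 * μ + ν + (M : ℝ) - 3) *
        (besselK ((M : ℝ) + 1 - ν) z) ^ 2 / besselK ((M : ℝ) - ν) z)
      (Ioi 0) ↔ μ + ν > 2 :=
  I_mu_convergence_general M ν hνM μ
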